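/- Let G = (V, E) be a finite directed graph with |V| = n ≥ 2, no self-loops, and |E| = n. If G is strongly connected, then for every vertex u ∈ V, the maximum over all v ∈ V of the shortest-path distance from u to v equals exactly n − 1. -/
import Mathlib


/-- `StepN E k u v` means there is a directed walk of exactly `k` edges from `u` to `v`
using edges of the relation `E`. -/
def StepN {V : Type*} (E : V → V → Prop) : ℕ → V → V → Prop
  | 0 => fun u v => u = v
  | n + 1 => fun u v => ∃ w, E u w ∧ StepN E n w v

/-- Shortest-path distance: the least number of edges of a directed walk from `u` to `v`. -/
noncomputable def distSP {V : Type*} (E : V → V → Prop) (u v : V) : ℕ :=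
  sInf {k : ℕ | StepN E k u v}

/-- A nonempty walk into `v` ends with some edge into `v`. -/
lemma stepN_last {V : Type*} (E : V → V → Prop) :
    ∀ (k : ℕ) (u v : V), k ≠ 0 → StepN E k u v → ∃ w, E w v := by
  intro k
  induction k with
  | zero => intro u v h; exact absurd rfl h
  | succ k ih =>
    intro u v _ hs
    obtain ⟨w, hw, hs⟩ := hs
    rcases Nat.eq_zero_or_pos k with hk | hk
    · subst hk
      cases hs
      exact ⟨u, hw⟩
    · exact ih w v hk.ne' hs

/-- In a finite strongly connected directed graph on `n ≥ 2` vertices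
with no self-loops and exactly `n` edges, the maximum over `v` of the shortest-path
distance from any vertex `u` equals exactly `n - 1`. -/
theorem max_shortest_path_of_n_edges
    {V : Type*} [Fintype V] [DecidableEq V]
    (E : Finset (V × V)) (n : ℕ)
    (hn : Fintype.card V = n) (h2 : 2 ≤ n)
    (hloop : ∀ v : V, (v, v) ∉ E)
    (hconn : ∀ u v : V, u ≠ v → ∃ k : ℕ, StepN (fun a b => (a, b) ∈ E) k u v)
    (hE : E.card = n) :
    ∀ u : V,
      Finset.univ.sup (fun v => distSP (fun a b => (a, b) ∈ E) u v) = n - 1 := by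
  classical
  have hcard1 : 1 < Fintype.card V := by omega
  -- every vertex has an out-neighbor
  have hout : ∀ a : V, ∃ b, (a, b) ∈ E := by
    intro a
    obtain ⟨b, hb⟩ := Fintype.exists_ne_of_one_lt_card hcard1 a
    obtain ⟨k, hk⟩ := hconn a b (fun h => hb (h.symm))
    match k, hk with
    | 0, hk => exact absurd hk.symm hb
    | k + 1, ⟨w, hw, _⟩ => exact ⟨w, hw⟩
  -- every vertex has an in-neighbor
  have hin : ∀ b : V, ∃ a, (a, b) ∈ E := by
    intro b
    obtain ⟨a, ha⟩ := Fintype.exists_ne_of_one_lt_card hcard1 b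
    obtain ⟨k, hk⟩ := hconn a b ha
    have hk0 : k ≠ 0 := by
      rintro rfl
      exact ha hk
    exact stepN_last _ k a b hk0 hk
  -- fiber counting: out-degrees
  have houtsum :
      ∑ a : V, (E.filter fun p => p.1 = a).card = E.card :=
    (Finset.card_eq_sum_card_fiberwise (fun p _ => Finset.mem_univ p.1)).symm
  have hinsum :
      ∑ a : V, (E.filter fun p => p.2 = a).card = E.card :=
    (Finset.card_eq_sum_card_fiberwise (fun p _ => Finset.mem_univ p.2)).symm
  have hdeg : ∀ (g : V × V → V), (∀ a : V, ∃ p ∈ E, g p = a) →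
      (∑ a : V, (E.filter fun p => g p = a).card = E.card) →
      ∀ a : V, (E.filter fun p => g p = a).card = 1 := by
    intro g hex hsum
    have hle : ∀ a : V, a ∈ Finset.univ → 1 ≤ (E.filter fun p => g p = a).card := by
      intro a _
      obtain ⟨p, hp, hgp⟩ := hex a
      exact Finset.card_pos.mpr ⟨p, Finset.mem_filter.mpr ⟨hp, hgp⟩⟩
    have hsum' : (∑ _a : V, 1) = ∑ a : V, (E.filter fun p => g p = a).card := by
      rw [hsum, hE, Finset.sum_const, smul_eq_mul, mul_one, Finset.card_univ, hn]
    have := (Finset.sum_eq_sum_iff_of_le hle).mp hsum'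
    intro a
    exact (this a (Finset.mem_univ a)).symm
  have houtdeg := hdeg (fun p => p.1) (fun a => by
    obtain ⟨b, hb⟩ := hout a; exact ⟨(a, b), hb, rfl⟩) houtsum
  have hindeg := hdeg (fun p => p.2) (fun a => by
    obtain ⟨b, hb⟩ := hin a; exact ⟨(b, a), hb, rfl⟩) hinsum
  -- unique out-neighbor function f
  have hfun : ∀ a : V, ∃ b : V, (a, b) ∈ E ∧ ∀ c : V, (a, c) ∈ E → c = b := by
    intro a
    obtain ⟨p, hp⟩ := Finset.card_eq_one.mp (houtdeg a)
    have hpmem : p ∈ E.filter fun q => q.1 = a := hp ▸ Finset.mem_singleton_self p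
    obtain ⟨hpE, hp1⟩ := Finset.mem_filter.mp hpmem
    refine ⟨p.2, by rw [← hp1]; exact hpE, ?_⟩
    intro c hc
    have : (a, c) ∈ E.filter fun q => q.1 = a := Finset.mem_filter.mpr ⟨hc, rfl⟩
    rw [hp] at this
    rw [Finset.mem_singleton] at this
    exact congrArg Prod.snd this
  choose f hf hf' using hfun
  have hedge : ∀ a b : V, (a, b) ∈ E ↔ b = f a :=
    fun a b => ⟨fun h => hf' a b h, fun h => h ▸ hf a⟩
  -- f is injective (in-degree 1)
  have hinjuniq : ∀ b a a' : V, (a, b) ∈ E → (a', b) ∈ E → a = a' := by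
    intro b a a' h1 h2
    obtain ⟨p, hp⟩ := Finset.card_eq_one.mp (hindeg b)
    have m1 : (a, b) ∈ E.filter fun q => q.2 = b := Finset.mem_filter.mpr ⟨h1, rfl⟩
    have m2 : (a', b) ∈ E.filter fun q => q.2 = b := Finset.mem_filter.mpr ⟨h2, rfl⟩
    rw [hp, Finset.mem_singleton] at m1 m2
    have := m1.trans m2.symm
    exact congrArg Prod.fst this
  have finj : Function.Injective f := by
    intro a a' h
    exact hinjuniq (f a) a a' (hf a) (h ▸ hf a')
  -- StepN ↔ iterate
  have stepN_iff : ∀ (k : ℕ) (a v : V),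
      StepN (fun a b => (a, b) ∈ E) k a v ↔ f^[k] a = v := by
    intro k
    induction k with
    | zero => intro a v; exact ⟨fun h => h, fun h => h⟩
    | succ k ih =>
      intro a v
      constructor
      · rintro ⟨w, hw, hs⟩
        have hwf : w = f a := (hedge a w).mp hw
        subst hwf
        rw [Function.iterate_succ_apply]
        exact (ih _ _).mp hs
      · intro h
        exact ⟨f a, hf a, (ih _ _).mpr (by rwa [Function.iterate_succ_apply] at h)⟩
  intro u
  -- f is a bijection; u is a periodic point
  have hbij : Function.Bijective f := Finite.injective_iff_bijective.mp finj
  set σ : Equiv.Perm V := Equiv.ofBijective f hbij with hσ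
  have hσf : ∀ (k : ℕ) (x : V), (σ ^ k) x = f^[k] x := by
    intro k x
    rw [Equiv.Perm.coe_pow]
    rfl
  have hper : Function.IsPeriodicPt f (orderOf σ) u := by
    show f^[orderOf σ] u = u
    rw [← hσf, pow_orderOf_eq_one]
    rfl
  have hord : 0 < orderOf σ := orderOf_pos σ
  set d := Function.minimalPeriod f u with hdd
  have hd0 : 0 < d := hper.minimalPeriod_pos hord
  -- surjectivity of the orbit
  have hsurj : ∀ v : V, ∃ k < d, f^[k] u = v := by
    intro v
    by_cases hv : v = u
    · exact ⟨0, hd0, hv.symm⟩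
    · obtain ⟨k, hk⟩ := hconn u v (fun h => hv h.symm)
      have hkv : f^[k] u = v := (stepN_iff k u v).mp hk
      exact ⟨k % d, Nat.mod_lt _ hd0, by
        rw [Function.iterate_mod_minimalPeriod_eq]; exact hkv⟩
  -- d = n
  have hinjOn : Set.InjOn (fun k => f^[k] u) (Set.Iio d) :=
    Function.iterate_injOn_Iio_minimalPeriod
  have hdn : d = n := by
    have hcardS : ((Finset.range d).image fun k => f^[k] u).card = d := by
      rw [Finset.card_image_of_injOn, Finset.card_range]
      intro a ha b hb hab
      exact hinjOn (Finset.mem_range.mp ha) (Finset.mem_range.mp hb) hab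
    have hSuniv : ((Finset.range d).image fun k => f^[k] u) = Finset.univ := by
      apply Finset.eq_univ_iff_forall.mpr
      intro v
      obtain ⟨k, hk, hkv⟩ := hsurj v
      exact Finset.mem_image.mpr ⟨k, Finset.mem_range.mpr hk, hkv⟩
    rw [hSuniv, Finset.card_univ, hn] at hcardS
    exact hcardS.symm
  -- conclude
  apply le_antisymm
  · apply Finset.sup_le
    intro v _
    obtain ⟨k, hk, hkv⟩ := hsurj v
    have hstep : StepN (fun a b => (a, b) ∈ E) k u v := (stepN_iff k u v).mpr hkv
    have h1 : distSP (fun a b => (a, b) ∈ E) u v ≤ k := Nat.sInf_le hstep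
    omega
  · have hv0 : distSP (fun a b => (a, b) ∈ E) u (f^[n - 1] u) = n - 1 := by
      apply le_antisymm
      · exact Nat.sInf_le ((stepN_iff (n - 1) u _).mpr rfl)
      · apply le_csInf ⟨n - 1, (stepN_iff (n - 1) u _).mpr rfl⟩
        intro k hk
        by_contra hlt
        push_neg at hlt
        have hkv : f^[k] u = f^[n - 1] u := (stepN_iff k u _).mp hk
        have : k = n - 1 := hinjOn
          (show k ∈ Set.Iio d by rw [Set.mem_Iio, hdn]; omega)
          (show n - 1 ∈ Set.Iio d by rw [Set.mem_Iio, hdn]; omega) hkv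
        omega
    calc n - 1 = distSP (fun a b => (a, b) ∈ E) u (f^[n - 1] u) := hv0.symm
      _ ≤ _ := Finset.le_sup (Finset.mem_univ (f^[n - 1] u))
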